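/- Let n, d be positive integers, let q be a positive integer, a ∈ ℤ and b ∈ ℤ^n with gcd(a, b₁, …, b_n, q) = 1. If gcd(a, q) > 1, then S(a/q, b/q) = 0. -/

import Mathlib

open MeasureTheory Complex Real
open scoped ENNReal
attribute [local instance] Classical.propDecidable
noncomputable section

/-- `ℤ^n`. -/
abbrev Zn (n : ℕ) := Fin n → ℤ
/-- `ℝ^n` with the Euclidean norm. -/
abbrev Rn (n : ℕ) := EuclideanSpace ℝ (Fin n)

/-- `e(t) = exp(2πit)`. -/
def eC (t : ℝ) : ℂ := Complex.exp (2 * Real.pi * Complex.I * t)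

/-- The canonical embedding `ℤ^n → ℝ^n`. -/
def itc {n : ℕ} (y : Zn n) : Rn n := WithLp.toLp 2 (fun i => (y i : ℝ))

/-- `|y|^{2d} = (y₁² + ⋯ + y_n²)^d` for `y ∈ ℤ^n`. -/
def nsq2d {n : ℕ} (d : ℕ) (y : Zn n) : ℤ := (∑ i, (y i)^2)^d

/-- The `ℓ^p(ℤ^n)` norm (with values in `ℝ≥0∞`) of an `ℝ≥0∞`-valued function. -/
def lpZ {n : ℕ} (p : ℝ≥0∞) (g : Zn n → ℝ≥0∞) : ℝ≥0∞ :=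
  if p = ⊤ then ⨆ x, g x else (∑' x, g x ^ p.toReal) ^ (1 / p.toReal)

/-- The Gauss sum `S(a/q, b/q) = q^{-n} Σ_{r ∈ [q]^n} e((a|r|^{2d} + b·r)/q)`. -/
def Sgauss (n d : ℕ) (a : ℤ) (q : ℕ) (b : Zn n) : ℂ :=
  ((q:ℂ))⁻¹ ^ n * ∑ r ∈ Fintype.piFinset (fun _ : Fin n => Finset.range q),
    eC (((a * (∑ i, ((r i : ℤ))^2)^d + ∑ i, b i * (r i : ℤ) : ℤ) : ℝ) / q)

/-- The Fourier transform of a finitely supported `f : ℤ^n → ℂ`. -/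
def fhat {n : ℕ} (f : Zn n → ℂ) (ξ : Rn n) : ℂ :=
  ∑' y : Zn n, f y * eC (-(∑ i, (y i : ℝ) * ξ i))

/-- The fundamental domain `[0,1)^n`. -/
def box (n : ℕ) : Set (Rn n) := {ξ : Rn n | ∀ i, ξ i ∈ Set.Ico (0:ℝ) 1}

/-- The multiplier operator `G(D) f (x) = ∫_{[0,1)^n} G(ξ) f̂(ξ) e(x·ξ) dξ` on `ℤ^n`. -/
def mop {n : ℕ} (G : Rn n → ℂ) (f : Zn n → ℂ) (x : Zn n) : ℂ :=
  ∫ ξ in box n, G ξ * fhat f ξ * eC (∑ i, (x i : ℝ) * ξ i)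

/-- `m_{j,λ}(ξ) = Σ_{y∈ℤ^n} e(λ|y|^{2d} + ξ·y) K_j(y)`. -/
def mj {n : ℕ} (d : ℕ) (Kj : Rn n → ℂ) (lam : ℝ) (ξ : Rn n) : ℂ :=
  ∑' y : Zn n, eC (lam * ((nsq2d d y : ℤ) : ℝ) + ∑ i, ξ i * (y i : ℝ)) * Kj (itc y)

/-- `Φ_{j,λ}(ξ) = ∫_{ℝ^n} e(λ|y|^{2d} + ξ·y) K_j(y) dy`. -/
def Phi {n : ℕ} (d : ℕ) (Kj : Rn n → ℂ) (lam : ℝ) (ξ : Rn n) : ℂ :=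
  ∫ y : Rn n, eC (lam * (∑ i, (y i)^2)^d + ∑ i, ξ i * y i) * Kj y

/-- The standing hypotheses on the dyadic kernel piece `K_j` (with constant `C₀`). -/
def KjHyp {n : ℕ} (C₀ : ℝ) (j : ℕ) (Kj : Rn n → ℂ) : Prop :=
  ContDiff ℝ 1 Kj ∧
  Function.support Kj ⊆ Metric.closedBall 0 ((2:ℝ)^(j+1)) ∧
  (2 ≤ j → Function.support Kj ⊆ {x : Rn n | (2:ℝ)^(j-1) ≤ ‖x‖}) ∧
  (∀ x, ‖Kj x‖ ≤ C₀ * (2:ℝ)^(-((j:ℝ)*n))) ∧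
  (∀ x, ‖fderiv ℝ Kj x‖ ≤ C₀ * (2:ℝ)^(-((j:ℝ)*(n+1))))

/-- The major arcs `X_{j,M}`. -/
def Xset (d : ℕ) (j : ℕ) (M : ℝ) : Set ℝ :=
  {lam : ℝ | ∃ a : ℤ, ∃ q : ℕ, 1 ≤ q ∧ (q:ℝ) ≤ (j:ℝ)^M ∧ Int.gcd a q = 1 ∧
    |lam - (a:ℝ)/q| ≤ (2:ℝ)^(-(2*(d:ℝ)*j)) * (j:ℝ)^M}

/-- Standing hypotheses on the smooth radial cutoff `χ`. -/
def chiHyp {n : ℕ} (χ : Rn n → ℝ) : Prop :=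
  ContDiff ℝ (⊤ : ℕ∞) χ ∧ (∀ ξ ξ' : Rn n, ‖ξ‖ = ‖ξ'‖ → χ ξ = χ ξ') ∧
  (∀ ξ, χ ξ ∈ Set.Icc (0:ℝ) 1) ∧
  (∀ ξ : Rn n, ‖ξ‖ ≤ 1/4 → χ ξ = 1) ∧
  (Function.support χ ⊆ {ξ : Rn n | ‖ξ‖ ≤ 1/2})

/-- `χ_{s,M}(ξ) = χ(2^{4s·2^{s/(2M)}} ξ)`. -/
def chiS {n : ℕ} (χ : Rn n → ℝ) (M : ℝ) (s : ℕ) (ξ : Rn n) : ℝ :=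
  χ ((2:ℝ) ^ (4*(s:ℝ) * (2:ℝ) ^ ((s:ℝ)/(2*M))) • ξ)

/-- `α = a/q ∈ 𝒜_s`, i.e. `2^{s-1} ≤ q < 2^s` for the reduced rational `α`. -/
def Amem (s : ℕ) (α : ℚ) : Prop := 2^(s-1) ≤ α.den ∧ α.den < 2^s

/-- The periodic multi-frequency multiplier `𝓛_{s,α}[m]` (with cutoff `χsM`). -/
def Lop (n d : ℕ) (χsM : Rn n → ℝ) (α : ℚ) (m : Rn n → ℂ) (ξ : Rn n) : ℂ :=
  ∑' b : Zn n, Sgauss n d α.num α.den b * m (ξ - ((α.den : ℝ))⁻¹ • itc b) *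
    (χsM (ξ - ((α.den : ℝ))⁻¹ • itc b) : ℂ)

/-- `φ_{s,M}(y) = 𝓕^{-1}_{ℝ^n}[χ_{s,M}](y)`, evaluated at `y ∈ ℤ^n`. -/
def phiSZ {n : ℕ} (χsM : Rn n → ℝ) (y : Zn n) : ℂ :=
  ∫ ξ : Rn n, (χsM ξ : ℂ) * eC (∑ i, (y i : ℝ) * ξ i)

/-- `φ_{s,M}(x) = 𝓕^{-1}_{ℝ^n}[χ_{s,M}](x)` on `ℝ^n`. -/
def phiSR {n : ℕ} (χsM : Rn n → ℝ) (x : Rn n) : ℂ :=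
  ∫ ξ : Rn n, (χsM ξ : ℂ) * eC (∑ i, x i * ξ i)

/-- The convolution operator `𝓛_{s,α}[m](D)` written on the space side:
`T_{s,α}[m] f(x) = Σ_y f(x-y) e(α|y|^{2d}) 𝓕^{-1}[m χ_{s,M}](y)`. -/
def TopM {n : ℕ} (d : ℕ) (χsM : Rn n → ℝ) (m : Rn n → ℂ) (α : ℚ) (f : Zn n → ℂ) (x : Zn n) : ℂ :=
  ∑' y : Zn n, f (x - y) * eC ((α:ℝ) * ((nsq2d d y : ℤ):ℝ)) *
    ∫ ξ : Rn n, m ξ * (χsM ξ : ℂ) * eC (∑ i, (y i : ℝ) * ξ i)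

/-- `T_{s,α} f(x) = Σ_y f(x-y) e(α|y|^{2d}) φ_{s,M}(y)`. -/
def TopS {n : ℕ} (d : ℕ) (χsM : Rn n → ℝ) (α : ℚ) (f : Zn n → ℂ) (x : Zn n) : ℂ :=
  ∑' y : Zn n, f (x - y) * eC ((α:ℝ) * ((nsq2d d y : ℤ):ℝ)) * phiSZ χsM y

/-- The kernel `𝒦^♯_{j,λ}(x,y)` of `T_{j,λ} T_{j,λ}^*`. -/
def Ksharp {n : ℕ} (d : ℕ) (Kj : Rn n → ℂ) (j : ℕ) (lam : Zn n → ℝ) (x y : Zn n) : ℂ :=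
  ∑' z : Zn n, eC (lam x * ((nsq2d d z : ℤ):ℝ) - lam y * ((nsq2d d (y - x + z) : ℤ):ℝ)) *
    Kj (itc z) * (starRingEnd ℂ) (Kj (itc (y - x + z))) *
    Set.indicator {w : Zn n | ‖itc w‖ ≤ (2:ℝ)^j} (fun _ => (1:ℂ)) (x - z)

/-- `Φ_{j,ν,M} = Φ_{j,ν} 1_{|ν| ≤ 2^{-2dj} j^M}`. -/
def PhiM {n : ℕ} (d : ℕ) (Kj : Rn n → ℂ) (j : ℕ) (M : ℝ) (ν : ℝ) (ξ : Rn n) : ℂ :=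
  if |ν| ≤ (2:ℝ)^(-(2*(d:ℝ)*j)) * (j:ℝ)^M then Phi d Kj ν ξ else 0

/-- The major arc multiplier piece `L^s_{j,λ,M}`. -/
def Lsmult (n d : ℕ) (χ : Rn n → ℝ) (Kj : Rn n → ℂ) (j s : ℕ) (M lam : ℝ) (ξ : Rn n) : ℂ :=
  if h : ∃ α : ℚ, Amem s α ∧ |lam - (α:ℝ)| ≤ (2:ℝ)^(-(4*(s:ℝ)*(2:ℝ)^((s:ℝ)/(2*M)))) then
    ∑' b : Zn n, Sgauss n d h.choose.num h.choose.den b *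
      PhiM d Kj j M (lam - (h.choose : ℝ)) (ξ - ((h.choose.den : ℝ))⁻¹ • itc b) *
      (chiS χ M s (ξ - ((h.choose.den : ℝ))⁻¹ • itc b) : ℂ)
  else 0

/-- The error multiplier `E_{j,λ,M}`. -/
def Esmult (n d : ℕ) (χ : Rn n → ℝ) (Kj : Rn n → ℂ) (j : ℕ) (M lam : ℝ) (ξ : Rn n) : ℂ :=
  (if lam ∈ Xset d j M then mj d Kj lam ξ else 0)
    - ∑' s : ℕ, if 1 ≤ s ∧ (2:ℝ)^s ≤ (j:ℝ)^M then Lsmult n d χ Kj j s M lam ξ else 0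

section Stmt7Aux

lemma eC_add' (s t : ℝ) : eC (s + t) = eC s * eC t := by
  unfold eC; rw [← Complex.exp_add]; push_cast; ring_nf

lemma eC_int' (k : ℤ) : eC (k : ℝ) = 1 := by
  unfold eC
  rw [show (2*(Real.pi:ℂ)*Complex.I*((k:ℝ):ℂ)) = (k:ℤ) * (2*(Real.pi:ℂ)*Complex.I) by push_cast; ring]
  exact Complex.exp_int_mul_two_pi_mul_I k

lemma eC_congr_int {q : ℕ} (hq : 0 < q) {x y : ℤ} (hxy : (q:ℤ) ∣ x - y) :
    eC ((x:ℝ)/q) = eC ((y:ℝ)/q) := by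
  obtain ⟨k, hk⟩ := hxy
  have hq0 : (q:ℝ) ≠ 0 := by positivity
  have hx : (x:ℝ)/q = (y:ℝ)/q + (k:ℝ) := by
    have hx' : (x:ℝ) = (y:ℝ) + (q:ℝ)*(k:ℝ) := by exact_mod_cast (by linarith : x = y + (q:ℤ)*k)
    field_simp [hx']
    linarith [hx']
  rw [hx, eC_add', eC_int', mul_one]

lemma sum_update_sub {n : ℕ} (i : Fin n) (f g : Fin n → ℤ) (hfg : ∀ j, j ≠ i → f j = g j) :
    (∑ j, f j) - (∑ j, g j) = f i - g i := by
  rw [← Finset.add_sum_erase Finset.univ f (Finset.mem_univ i),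
      ← Finset.add_sum_erase Finset.univ g (Finset.mem_univ i)]
  have h : ∑ j ∈ Finset.univ.erase i, f j = ∑ j ∈ Finset.univ.erase i, g j :=
    Finset.sum_congr rfl fun j hj => hfg j (Finset.ne_of_mem_erase hj)
  rw [h]; ring

end Stmt7Aux

/-- Lemma 2.3: vanishing of the Gauss sum when `gcd(a,q) > 1`. -/
theorem stmt7 (n d : ℕ) (hn : 0 < n) (hd : 0 < d) (q : ℕ) (hq : 0 < q) (a : ℤ) (b : Zn n)
    (hco : Nat.gcd (Int.gcd a (Finset.univ.gcd b)) q = 1) (h : 1 < Int.gcd a q) :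
    Sgauss n d a q b = 0 := by
  classical
  -- pick a prime p dividing gcd(a,q)
  set g := Int.gcd a q with hg
  set p := g.minFac with hp
  have hpp : p.Prime := Nat.minFac_prime (by omega)
  have hpg : p ∣ g := Nat.minFac_dvd g
  have hgq : g ∣ q := by
    have h1 : (g:ℤ) ∣ (q:ℤ) := Int.gcd_dvd_right a (q:ℤ)
    exact_mod_cast h1
  have hpq : p ∣ q := hpg.trans hgq
  have hpa : (p:ℤ) ∣ a := dvd_trans (by exact_mod_cast hpg) (Int.gcd_dvd_left a (q:ℤ))
  -- find a coordinate i₀ with p ∤ b i₀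
  have hex : ∃ i₀ : Fin n, ¬ (p:ℤ) ∣ b i₀ := by
    by_contra hall
    push_neg at hall
    have h1 : (p:ℤ) ∣ Finset.univ.gcd b := Finset.dvd_gcd fun j _ => hall j
    have h2 : (p:ℤ) ∣ (Int.gcd a (Finset.univ.gcd b) : ℤ) := Int.dvd_coe_gcd hpa h1
    have h3 : p ∣ Int.gcd a (Finset.univ.gcd b) := by exact_mod_cast h2
    have h4 : p ∣ Nat.gcd (Int.gcd a (Finset.univ.gcd b)) q := Nat.dvd_gcd h3 hpq
    rw [hco] at h4
    exact absurd (Nat.dvd_one.mp h4) hpp.one_lt.ne'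
  obtain ⟨i₀, hbi⟩ := hex
  set m := q / p with hm
  have hq2 : p * m = q := Nat.mul_div_cancel' hpq
  have hqz : (q:ℤ) = (p:ℤ) * m := by exact_mod_cast hq2.symm
  have hm0 : 0 < m := Nat.div_pos (Nat.le_of_dvd hq hpq) hpp.pos
  have hmq : m ≤ q := Nat.div_le_self _ _
  -- setup
  set T := Fintype.piFinset (fun _ : Fin n => Finset.range q) with hT
  set F : (Fin n → ℕ) → ℤ := fun r => a * (∑ i, ((r i : ℤ))^2)^d + ∑ i, b i * (r i : ℤ) with hF
  set σ : (Fin n → ℕ) → (Fin n → ℕ) := fun r => Function.update r i₀ ((r i₀ + m) % q) with hσ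
  set τ : (Fin n → ℕ) → (Fin n → ℕ) := fun r => Function.update r i₀ ((r i₀ + (q - m)) % q) with hτ
  set u : ℂ := eC (((b i₀ * m : ℤ) : ℝ)/q) with hu
  -- per-term identity
  have key : ∀ r : Fin n → ℕ, eC (((F (σ r)) : ℝ)/q) = u * eC (((F r) : ℝ)/q) := by
    intro r
    set c : ℕ := (r i₀ + m) % q with hc
    set k : ℕ := (r i₀ + m) / q with hk
    have hck : c + q * k = r i₀ + m := Nat.mod_add_div _ _
    have hcz : (c:ℤ) = (r i₀ : ℤ) + m - q * k := by
      have h5 : (c:ℤ) + q * k = (r i₀ : ℤ) + m := by exact_mod_cast hck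
      linarith
    have hσeq : ∀ j, j ≠ i₀ → σ r j = r j := fun j hj => Function.update_of_ne hj _ _
    have hσi : σ r i₀ = c := Function.update_self _ _ _
    have hdsq : (∑ j, ((σ r j : ℤ))^2) - (∑ j, ((r j : ℤ))^2) = (c:ℤ)^2 - (r i₀ : ℤ)^2 := by
      have h6 := sum_update_sub i₀ (fun j => ((σ r j : ℤ))^2) (fun j => ((r j : ℤ))^2)
        (fun j hj => by simp only [hσeq j hj])
      simpa [hσi] using h6
    have hdvd1 : (m:ℤ) ∣ (c:ℤ) - r i₀ :=
      ⟨1 - p * k, by rw [hcz, hqz]; ring⟩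
    have hdvd2 : (m:ℤ) ∣ (∑ j, ((σ r j : ℤ))^2) - (∑ j, ((r j : ℤ))^2) := by
      rw [hdsq, show (c:ℤ)^2 - (r i₀ : ℤ)^2 = ((c:ℤ) - r i₀) * ((c:ℤ) + r i₀) by ring]
      exact hdvd1.mul_right _
    have hdvd3 : (m:ℤ) ∣ (∑ j, ((σ r j : ℤ))^2)^d - (∑ j, ((r j : ℤ))^2)^d :=
      dvd_trans hdvd2 (sub_dvd_pow_sub_pow _ _ d)
    have hdvdA : (q:ℤ) ∣ a * ((∑ j, ((σ r j : ℤ))^2)^d - (∑ j, ((r j : ℤ))^2)^d) := by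
      obtain ⟨w, hw⟩ := hdvd3
      obtain ⟨a', ha'⟩ := hpa
      exact ⟨a' * w, by rw [hw, ha', hqz]; ring⟩
    have hdiffb : (∑ j, b j * (σ r j : ℤ)) - (∑ j, b j * (r j : ℤ))
        = b i₀ * c - b i₀ * r i₀ := by
      have h7 := sum_update_sub i₀ (fun j => b j * (σ r j : ℤ)) (fun j => b j * (r j : ℤ))
        (fun j hj => by simp only [hσeq j hj])
      simpa [hσi] using h7
    have hdvdB : (q:ℤ) ∣ (b i₀ * c - b i₀ * r i₀) - b i₀ * m :=
      ⟨-(b i₀ * k), by rw [hcz]; ring⟩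
    have hdvdF : (q:ℤ) ∣ F (σ r) - (F r + b i₀ * m) := by
      have h8 : F (σ r) - (F r + b i₀ * m)
          = a * ((∑ j, ((σ r j : ℤ))^2)^d - (∑ j, ((r j : ℤ))^2)^d)
            + ((b i₀ * c - b i₀ * r i₀) - b i₀ * m) := by
        simp only [hF]
        linear_combination hdiffb
      rw [h8]
      exact dvd_add hdvdA hdvdB
    have h9 : eC (((F (σ r)) : ℝ)/q) = eC (((F r + b i₀ * m : ℤ) : ℝ)/q) :=
      eC_congr_int hq hdvdF
    have h10 : ((F r + b i₀ * m : ℤ) : ℝ)/q = ((b i₀ * m : ℤ) : ℝ)/q + ((F r : ℤ) : ℝ)/q := by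
      push_cast
      ring
    rw [h9, h10, eC_add']
  -- the bijection σ on T
  have hσT : ∀ r ∈ T, σ r ∈ T := by
    intro r hr
    rw [hT, Fintype.mem_piFinset] at *
    intro j
    rcases eq_or_ne j i₀ with rfl | hj
    · simpa [hσ, Finset.mem_range] using Nat.mod_lt _ hq
    · simpa [hσ, Function.update_of_ne hj] using hr j
  have hτT : ∀ r ∈ T, τ r ∈ T := by
    intro r hr
    rw [hT, Fintype.mem_piFinset] at *
    intro j
    rcases eq_or_ne j i₀ with rfl | hj
    · simpa [hτ, Finset.mem_range] using Nat.mod_lt _ hq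
    · simpa [hτ, Function.update_of_ne hj] using hr j
  have hτσ : ∀ r ∈ T, τ (σ r) = r := by
    intro r hr
    rw [hT, Fintype.mem_piFinset] at hr
    funext j
    rcases eq_or_ne j i₀ with rfl | hj
    · have hrj : r j < q := by simpa [Finset.mem_range] using hr j
      simp only [hτ, hσ, Function.update_self]
      rw [Nat.mod_add_mod, add_assoc, Nat.add_sub_cancel' hmq, Nat.add_mod_right,
        Nat.mod_eq_of_lt hrj]
    · simp [hτ, hσ, Function.update_of_ne hj]
  have hστ : ∀ r ∈ T, σ (τ r) = r := by
    intro r hr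
    rw [hT, Fintype.mem_piFinset] at hr
    funext j
    rcases eq_or_ne j i₀ with rfl | hj
    · have hrj : r j < q := by simpa [Finset.mem_range] using hr j
      simp only [hτ, hσ, Function.update_self]
      rw [Nat.mod_add_mod, add_assoc, Nat.sub_add_cancel hmq, Nat.add_mod_right,
        Nat.mod_eq_of_lt hrj]
    · simp [hτ, hσ, Function.update_of_ne hj]
  -- reindex the sum
  set Ssum : ℂ := ∑ r ∈ T, eC (((F r) : ℝ)/q) with hSsum
  have hre : Ssum = ∑ r ∈ T, eC (((F (σ r)) : ℝ)/q) := by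
    rw [hSsum]
    exact Finset.sum_nbij' τ σ hτT hσT hστ hτσ (fun r hr => by rw [hστ r hr])
  have hmul : Ssum = u * Ssum := by
    calc Ssum = ∑ r ∈ T, eC (((F (σ r)) : ℝ)/q) := hre
      _ = ∑ r ∈ T, u * eC (((F r) : ℝ)/q) := Finset.sum_congr rfl fun r _ => key r
      _ = u * Ssum := by rw [← Finset.mul_sum]
  -- u ≠ 1
  have hune : u ≠ 1 := by
    intro hu1
    have hp0 : (p:ℝ) ≠ 0 := by exact_mod_cast hpp.pos.ne'
    have hm0' : (m:ℝ) ≠ 0 := by exact_mod_cast hm0.ne'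
    have hval : ((b i₀ * m : ℤ) : ℝ)/q = (b i₀ : ℝ)/p := by
      have hqr : (q:ℝ) = (p:ℝ) * m := by exact_mod_cast hq2.symm
      rw [hqr]
      push_cast
      field_simp
    rw [hu, hval] at hu1
    unfold eC at hu1
    rw [Complex.exp_eq_one_iff] at hu1
    obtain ⟨k, hk⟩ := hu1
    have hk' : (((b i₀ : ℝ)/p : ℝ) : ℂ) = (k : ℂ) := by
      apply mul_left_cancel₀ Complex.two_pi_I_ne_zero
      rw [hk]
      ring
    have hk2 : (b i₀ : ℝ)/p = (k : ℝ) := by exact_mod_cast hk'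
    have hk3 : (b i₀ : ℝ) = (k : ℝ) * p := by
      field_simp at hk2
      linarith
    have hk4 : b i₀ = k * p := by exact_mod_cast hk3
    exact hbi ⟨k, by rw [hk4]; ring⟩
  have hS0 : Ssum = 0 := by
    by_contra hS
    exact hune ((mul_left_eq_self₀.mp hmul.symm).resolve_right hS)
  rw [Sgauss, ← hT]
  have : (∑ r ∈ T, eC (((a * (∑ i, ((r i : ℤ))^2)^d + ∑ i, b i * (r i : ℤ) : ℤ) : ℝ) / q)) = Ssum := by
    rw [hSsum]
  rw [this, hS0, mul_zero]
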